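/- Let M = (S, A, P, R, γ) be a finite discounted MDP with rewards in [0,1], g : A → G a grouping function, π^i a lower-level policy, and M_G the associated grouped MDP. Then for every state s, max_{π∈Π_G} V_M^π(s) = V_{M_G}^*(s); in particular there is a policy π_G^* ∈ Π_G attaining this maximum simultaneously at every state, and V_M^{π_G^*} = V_{M_G}^*. -/

import Mathlib

open scoped BigOperators Classical

namespace MDPGroup

variable {S A G : Type*}

/-- `P` is a transition kernel: `P s a ·` is a probability distribution on states. -/
structure IsKernel [Fintype S] (P : S → A → S → ℝ) : Prop where
  nonneg : ∀ s a s', 0 ≤ P s a s'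
  sum_one : ∀ s a, ∑ s', P s a s' = 1

/-- `π` is a stationary randomized policy. -/
structure IsPolicy [Fintype A] (π : S → A → ℝ) : Prop where
  nonneg : ∀ s a, 0 ≤ π s a
  sum_one : ∀ s, ∑ a, π s a = 1

/-- `Q` satisfies the Bellman equation for policy `π`. -/
def IsBellman [Fintype S] [Fintype A] (P : S → A → S → ℝ) (R : S → A → ℝ) (γ : ℝ)
    (π : S → A → ℝ) (Q : S → A → ℝ) : Prop :=
  ∀ s a, Q s a = R s a + γ * ∑ s', P s a s' * ∑ a', π s' a' * Q s' a'

/-- The action-value function of policy `π` (the unique solution of the Bellman equation,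
when it exists). -/
noncomputable def Qpi [Fintype S] [Fintype A] (P : S → A → S → ℝ) (R : S → A → ℝ)
    (γ : ℝ) (π : S → A → ℝ) : S → A → ℝ :=
  if h : ∃ Q : S → A → ℝ, IsBellman P R γ π Q then h.choose else 0

/-- The state-value function of policy `π`. -/
noncomputable def Vpi [Fintype S] [Fintype A] (P : S → A → S → ℝ) (R : S → A → ℝ)
    (γ : ℝ) (π : S → A → ℝ) : S → ℝ :=
  fun s => ∑ a, π s a * Qpi P R γ π s a

/-- The optimal state-value function. -/
noncomputable def Vstar [Fintype S] [Fintype A] (P : S → A → S → ℝ) (R : S → A → ℝ)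
    (γ : ℝ) : S → ℝ :=
  fun s => ⨆ π : {π : S → A → ℝ // IsPolicy π}, Vpi P R γ π.1 s

/-- The optimal action-value function. -/
noncomputable def Qstar [Fintype S] [Fintype A] (P : S → A → S → ℝ) (R : S → A → ℝ)
    (γ : ℝ) : S → A → ℝ :=
  fun s a => ⨆ π : {π : S → A → ℝ // IsPolicy π}, Qpi P R γ π.1 s a

/-- Supremum norm of a function on a (finite) index type. -/
noncomputable def supNorm {ι : Type*} (f : ι → ℝ) : ℝ := ⨆ i, |f i|

/-- A lower-level policy, selecting an action within each group. -/
structure IsLower [Fintype A] (g : A → G) (πi : G → A → ℝ) : Prop where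
  nonneg : ∀ h a, 0 ≤ πi h a
  sum_one : ∀ h, ∑ a, πi h a = 1
  support : ∀ h a, g a ≠ h → πi h a = 0

/-- The composed policy `π^o ∘ π^i`. -/
def compose (g : A → G) (πi : G → A → ℝ) (πo : S → G → ℝ) : S → A → ℝ :=
  fun s a => πo s (g a) * πi (g a) a

/-- Grouped transition kernel. -/
noncomputable def PG [Fintype A] (P : S → A → S → ℝ) (πi : G → A → ℝ) : S → G → S → ℝ :=
  fun s h s' => ∑ a, πi h a * P s a s'

/-- Grouped reward. -/
noncomputable def RG [Fintype A] (R : S → A → ℝ) (πi : G → A → ℝ) : S → G → ℝ :=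
  fun s h => ∑ a, πi h a * R s a

/-- The optimal transition deviation factor `β_P^*(g)`. -/
noncomputable def betaPstar [Fintype S] (P : S → A → S → ℝ) (g : A → G) : ℝ :=
  ⨆ p : S × G, (1 - ∑ s', ⨅ a : {a : A // g a = p.2}, P p.1 a.1 s')

/-- The optimal reward deviation factor `β_R^*(g)`. -/
noncomputable def betaRstar (R : S → A → ℝ) (g : A → G) : ℝ :=
  ⨆ q : {q : S × A × A // g q.2.1 = g q.2.2}, (R q.1.1 q.1.2.1 - R q.1.1 q.1.2.2)



set_option linter.unusedSectionVars false

section Generic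

variable [Fintype S] [Fintype A] [Nonempty S] [Nonempty A]
variable (P : S → A → S → ℝ) (R : S → A → ℝ) (γ : ℝ) (π : S → A → ℝ)

/-- The Bellman operator of a policy. -/
noncomputable def bOp : (S → A → ℝ) → (S → A → ℝ) :=
  fun Q s a => R s a + γ * ∑ s', P s a s' * ∑ a', π s' a' * Q s' a'

variable {P R γ π}

lemma inner_bound (hP : IsKernel P) (hπ : IsPolicy π) {f : S → A → ℝ} {D : ℝ}
    (hD : ∀ s a, |f s a| ≤ D) (s : S) (a : A) :
    |∑ s', P s a s' * ∑ a', π s' a' * f s' a'| ≤ D := by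
  have hD0 : 0 ≤ D := le_trans (abs_nonneg _) (hD (Classical.arbitrary S) (Classical.arbitrary A))
  have key : ∀ s', |∑ a', π s' a' * f s' a'| ≤ D := by
    intro s'
    calc |∑ a', π s' a' * f s' a'| ≤ ∑ a', |π s' a' * f s' a'| := Finset.abs_sum_le_sum_abs _ _
      _ ≤ ∑ a', π s' a' * D := by
          refine Finset.sum_le_sum fun a' _ => ?_
          rw [abs_mul, abs_of_nonneg (hπ.nonneg s' a')]
          exact mul_le_mul_of_nonneg_left (hD s' a') (hπ.nonneg s' a')
      _ = D := by rw [← Finset.sum_mul, hπ.sum_one, one_mul]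
  calc |∑ s', P s a s' * ∑ a', π s' a' * f s' a'|
      ≤ ∑ s', |P s a s' * ∑ a', π s' a' * f s' a'| := Finset.abs_sum_le_sum_abs _ _
    _ ≤ ∑ s', P s a s' * D := by
        refine Finset.sum_le_sum fun s' _ => ?_
        rw [abs_mul, abs_of_nonneg (hP.nonneg s a s')]
        exact mul_le_mul_of_nonneg_left (key s') (hP.nonneg s a s')
    _ = D := by rw [← Finset.sum_mul, hP.sum_one, one_mul]

lemma bOp_lipschitz (hP : IsKernel P) (hγ0 : 0 ≤ γ) (hπ : IsPolicy π) :
    LipschitzWith ⟨γ, hγ0⟩ (bOp P R γ π) := by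
  apply LipschitzWith.of_dist_le_mul
  intro Q1 Q2
  have hd0 : 0 ≤ dist Q1 Q2 := dist_nonneg
  change dist _ _ ≤ γ * dist Q1 Q2
  rw [dist_pi_le_iff (by positivity)]
  intro s
  rw [dist_pi_le_iff (by positivity)]
  intro a
  rw [Real.dist_eq]
  have hf : ∀ s' a', |(fun s' a' => Q1 s' a' - Q2 s' a') s' a'| ≤ dist Q1 Q2 := by
    intro s' a'
    calc |Q1 s' a' - Q2 s' a'| = dist (Q1 s' a') (Q2 s' a') := (Real.dist_eq _ _).symm
      _ ≤ dist (Q1 s') (Q2 s') := dist_le_pi_dist _ _ _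
      _ ≤ dist Q1 Q2 := dist_le_pi_dist _ _ _
  have := inner_bound hP hπ hf s a
  have hexp : bOp P R γ π Q1 s a - bOp P R γ π Q2 s a
      = γ * ∑ s', P s a s' * ∑ a', π s' a' * (Q1 s' a' - Q2 s' a') := by
    simp only [bOp, mul_sub, Finset.sum_sub_distrib, mul_sub]
    ring
  rw [hexp, abs_mul, abs_of_nonneg hγ0]
  exact mul_le_mul_of_nonneg_left this hγ0

lemma exists_bellman (hP : IsKernel P) (hγ0 : 0 ≤ γ) (hγ1 : γ < 1) (hπ : IsPolicy π) :
    ∃ Q : S → A → ℝ, IsBellman P R γ π Q := by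
  have hc : ContractingWith ⟨γ, hγ0⟩ (bOp P R γ π) :=
    ⟨by exact_mod_cast hγ1, bOp_lipschitz hP hγ0 hπ⟩
  obtain ⟨Q, hQ, -⟩ := hc.exists_fixedPoint (0 : S → A → ℝ) (edist_ne_top _ _)
  exact ⟨Q, fun s a => (congrFun (congrFun hQ.symm s) a)⟩

lemma bellman_unique (hP : IsKernel P) (hγ0 : 0 ≤ γ) (hγ1 : γ < 1) (hπ : IsPolicy π)
    {Q1 Q2 : S → A → ℝ} (h1 : IsBellman P R γ π Q1) (h2 : IsBellman P R γ π Q2) :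
    Q1 = Q2 := by
  set D : ℝ := Finset.univ.sup' (Finset.univ_nonempty) (fun p : S × A => |Q1 p.1 p.2 - Q2 p.1 p.2|)
    with hDdef
  have hD : ∀ s a, |Q1 s a - Q2 s a| ≤ D := fun s a =>
    Finset.le_sup' (fun p : S × A => |Q1 p.1 p.2 - Q2 p.1 p.2|) (Finset.mem_univ (s, a))
  obtain ⟨p, -, hp⟩ := Finset.exists_mem_eq_sup' (Finset.univ_nonempty)
    (fun p : S × A => |Q1 p.1 p.2 - Q2 p.1 p.2|)
  have hexp : Q1 p.1 p.2 - Q2 p.1 p.2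
      = γ * ∑ s', P p.1 p.2 s' * ∑ a', π s' a' * (Q1 s' a' - Q2 s' a') := by
    rw [h1 p.1 p.2, h2 p.1 p.2]
    simp only [mul_sub, Finset.sum_sub_distrib]
    ring
  have hbound : D ≤ γ * D := by
    calc D = |Q1 p.1 p.2 - Q2 p.1 p.2| := by rw [hDdef, hp]
      _
        = |γ * ∑ s', P p.1 p.2 s' * ∑ a', π s' a' * (Q1 s' a' - Q2 s' a')| := by rw [hexp]
      _ = γ * |∑ s', P p.1 p.2 s' * ∑ a', π s' a' * (Q1 s' a' - Q2 s' a')| := by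
          rw [abs_mul, abs_of_nonneg hγ0]
      _ ≤ γ * D := mul_le_mul_of_nonneg_left (inner_bound hP hπ hD p.1 p.2) hγ0
  have hD0 : D ≤ 0 := by nlinarith
  funext s a
  have h := (hD s a).trans hD0
  have := abs_nonpos_iff.mp h
  linarith [sub_eq_zero.mp this]

/-- sup over actions -/
noncomputable def msup (f : A → ℝ) : ℝ := Finset.univ.sup' Finset.univ_nonempty f

lemma le_msup (f : A → ℝ) (a : A) : f a ≤ msup f :=
  Finset.le_sup' f (Finset.mem_univ a)

lemma exists_msup (f : A → ℝ) : ∃ a, msup f = f a := by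
  obtain ⟨a, -, ha⟩ := Finset.exists_mem_eq_sup' (Finset.univ_nonempty (α := A)) f
  exact ⟨a, ha⟩

lemma abs_msup_sub_le {f1 f2 : A → ℝ} {D : ℝ} (hD : ∀ a, |f1 a - f2 a| ≤ D) :
    |msup f1 - msup f2| ≤ D := by
  rw [abs_le]
  constructor
  · obtain ⟨a, ha⟩ := exists_msup f2
    have h1 := le_msup f1 a
    have := abs_le.mp (hD a)
    linarith
  · obtain ⟨a, ha⟩ := exists_msup f1
    have := abs_le.mp (hD a)
    linarith [le_msup f2 a]

lemma kernel_avg_bound (hP : IsKernel P) {f : S → ℝ} {D : ℝ}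
    (hD : ∀ s', |f s'| ≤ D) (s : S) (a : A) :
    |∑ s', P s a s' * f s'| ≤ D := by
  calc |∑ s', P s a s' * f s'| ≤ ∑ s', |P s a s' * f s'| := Finset.abs_sum_le_sum_abs _ _
    _ ≤ ∑ s', P s a s' * D := by
        refine Finset.sum_le_sum fun s' _ => ?_
        rw [abs_mul, abs_of_nonneg (hP.nonneg s a s')]
        exact mul_le_mul_of_nonneg_left (hD s') (hP.nonneg s a s')
    _ = D := by rw [← Finset.sum_mul, hP.sum_one, one_mul]

variable (P R γ) in
/-- Bellman optimality operator. -/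
noncomputable def bOptOp : (S → A → ℝ) → (S → A → ℝ) :=
  fun Q s a => R s a + γ * ∑ s', P s a s' * msup (Q s')

lemma bOptOp_lipschitz (hP : IsKernel P) (hγ0 : 0 ≤ γ) :
    LipschitzWith ⟨γ, hγ0⟩ (bOptOp P R γ) := by
  apply LipschitzWith.of_dist_le_mul
  intro Q1 Q2
  have hd0 : 0 ≤ dist Q1 Q2 := dist_nonneg
  change dist _ _ ≤ γ * dist Q1 Q2
  rw [dist_pi_le_iff (by positivity)]
  intro s
  rw [dist_pi_le_iff (by positivity)]
  intro a
  rw [Real.dist_eq]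
  have hf : ∀ s', |msup (Q1 s') - msup (Q2 s')| ≤ dist Q1 Q2 := by
    intro s'
    refine abs_msup_sub_le fun a' => ?_
    calc |Q1 s' a' - Q2 s' a'| = dist (Q1 s' a') (Q2 s' a') := (Real.dist_eq _ _).symm
      _ ≤ dist (Q1 s') (Q2 s') := dist_le_pi_dist _ _ _
      _ ≤ dist Q1 Q2 := dist_le_pi_dist _ _ _
  have hexp : bOptOp P R γ Q1 s a - bOptOp P R γ Q2 s a
      = γ * ∑ s', P s a s' * (msup (Q1 s') - msup (Q2 s')) := by
    simp only [bOptOp, mul_sub, Finset.sum_sub_distrib]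
    ring
  rw [hexp, abs_mul, abs_of_nonneg hγ0]
  exact mul_le_mul_of_nonneg_left (kernel_avg_bound hP hf s a) hγ0

lemma exists_optimal (hP : IsKernel P) (hγ0 : 0 ≤ γ) (hγ1 : γ < 1) :
    ∃ πs : S → A → ℝ, IsPolicy πs ∧
      (∀ π' : S → A → ℝ, IsPolicy π' → ∀ s, Vpi P R γ π' s ≤ Vpi P R γ πs s) ∧
      (∀ s, Vpi P R γ πs s = Vstar P R γ s) := by
  -- the optimal Q-function
  have hc : ContractingWith ⟨γ, hγ0⟩ (bOptOp P R γ) :=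
    ⟨by exact_mod_cast hγ1, bOptOp_lipschitz hP hγ0⟩
  obtain ⟨Qo, hQoFix, -⟩ := hc.exists_fixedPoint (0 : S → A → ℝ) (edist_ne_top _ _)
  have hQo : ∀ s a, Qo s a = R s a + γ * ∑ s', P s a s' * msup (Qo s') := by
    intro s a; exact (congrFun (congrFun hQoFix.symm s) a)
  -- greedy policy
  have hgr : ∀ s : S, ∃ a, msup (Qo s) = Qo s a := fun s => exists_msup (Qo s)
  choose astar hastar using hgr
  set πs : S → A → ℝ := fun s a => if a = astar s then 1 else 0 with hπsdef
  have hπs : IsPolicy πs := by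
    constructor
    · intro s a; dsimp only [πs]; split <;> norm_num
    · intro s; simp [πs]
  have hmix : ∀ (s : S) (f : A → ℝ), ∑ a, πs s a * f a = f (astar s) := by
    intro s f
    simp [πs]
  have hQoBell : IsBellman P R γ πs Qo := by
    intro s a
    rw [hQo s a]
    congr 1
    congr 1
    refine Finset.sum_congr rfl fun s' _ => ?_
    rw [hmix s' (Qo s'), hastar s']
  have hQpiEq : Qpi P R γ πs = Qo := by
    have hex : ∃ Q : S → A → ℝ, IsBellman P R γ πs Q := ⟨Qo, hQoBell⟩
    have : IsBellman P R γ πs (Qpi P R γ πs) := by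
      rw [Qpi, dif_pos hex]; exact hex.choose_spec
    exact bellman_unique hP hγ0 hγ1 hπs this hQoBell
  -- any policy's Q is at most Qo
  have hQle : ∀ π' : S → A → ℝ, IsPolicy π' → ∀ s a, Qpi P R γ π' s a ≤ Qo s a := by
    intro π' hπ' s a
    have hex : ∃ Q : S → A → ℝ, IsBellman P R γ π' Q := exists_bellman hP hγ0 hγ1 hπ'
    set Q := Qpi P R γ π' with hQdef
    have hQB : IsBellman P R γ π' Q := by
      rw [hQdef, Qpi, dif_pos hex]; exact hex.choose_spec
    set m : ℝ := Finset.univ.sup' Finset.univ_nonempty (fun p : S × A => Q p.1 p.2 - Qo p.1 p.2)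
      with hmdef
    have hm : ∀ s a, Q s a - Qo s a ≤ m := fun s a =>
      Finset.le_sup' (fun p : S × A => Q p.1 p.2 - Qo p.1 p.2) (Finset.mem_univ (s, a))
    obtain ⟨p, -, hp⟩ := Finset.exists_mem_eq_sup' (Finset.univ_nonempty)
      (fun p : S × A => Q p.1 p.2 - Qo p.1 p.2)
    have hinner : ∀ s', (∑ a', π' s' a' * Q s' a') - msup (Qo s') ≤ m := by
      intro s'
      have h1 : ∑ a', π' s' a' * Q s' a' ≤ ∑ a', π' s' a' * (Qo s' a' + m) := by
        refine Finset.sum_le_sum fun a' _ => ?_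
        exact mul_le_mul_of_nonneg_left (by linarith [hm s' a']) (hπ'.nonneg s' a')
      have h2 : ∑ a', π' s' a' * (Qo s' a' + m) = (∑ a', π' s' a' * Qo s' a') + m := by
        simp only [mul_add, Finset.sum_add_distrib, ← Finset.sum_mul, hπ'.sum_one, one_mul]
      have h3 : ∑ a', π' s' a' * Qo s' a' ≤ msup (Qo s') := by
        calc ∑ a', π' s' a' * Qo s' a' ≤ ∑ a', π' s' a' * msup (Qo s') := by
              refine Finset.sum_le_sum fun a' _ => ?_
              exact mul_le_mul_of_nonneg_left (le_msup _ a') (hπ'.nonneg s' a')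
          _ = msup (Qo s') := by rw [← Finset.sum_mul, hπ'.sum_one, one_mul]
      linarith
    have hbound : m ≤ γ * m := by
      have hexp : Q p.1 p.2 - Qo p.1 p.2
          = γ * ∑ s', P p.1 p.2 s' * ((∑ a', π' s' a' * Q s' a') - msup (Qo s')) := by
        rw [hQB p.1 p.2, hQo p.1 p.2]
        simp only [mul_sub, Finset.sum_sub_distrib]
        ring
      have hsum : ∑ s', P p.1 p.2 s' * ((∑ a', π' s' a' * Q s' a') - msup (Qo s')) ≤ m := by
        calc ∑ s', P p.1 p.2 s' * ((∑ a', π' s' a' * Q s' a') - msup (Qo s'))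
            ≤ ∑ s', P p.1 p.2 s' * m := Finset.sum_le_sum fun s' _ =>
              mul_le_mul_of_nonneg_left (hinner s') (hP.nonneg p.1 p.2 s')
          _ = m := by rw [← Finset.sum_mul, hP.sum_one, one_mul]
      calc m = Q p.1 p.2 - Qo p.1 p.2 := by rw [hmdef, hp]
        _ = γ * ∑ s', P p.1 p.2 s' * ((∑ a', π' s' a' * Q s' a') - msup (Qo s')) := hexp
        _ ≤ γ * m := mul_le_mul_of_nonneg_left hsum hγ0
    have hm0 : m ≤ 0 := by nlinarith
    linarith [hm s a]
  -- value comparison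
  have hVs : ∀ s, Vpi P R γ πs s = msup (Qo s) := by
    intro s
    rw [Vpi, hQpiEq, hmix s (Qo s), hastar s]
  have hVle : ∀ π' : S → A → ℝ, IsPolicy π' → ∀ s, Vpi P R γ π' s ≤ Vpi P R γ πs s := by
    intro π' hπ' s
    rw [hVs s, Vpi]
    calc ∑ a, π' s a * Qpi P R γ π' s a ≤ ∑ a, π' s a * Qo s a :=
          Finset.sum_le_sum fun a _ =>
            mul_le_mul_of_nonneg_left (hQle π' hπ' s a) (hπ'.nonneg s a)
      _ ≤ ∑ a, π' s a * msup (Qo s) := Finset.sum_le_sum fun a _ =>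
            mul_le_mul_of_nonneg_left (le_msup _ a) (hπ'.nonneg s a)
      _ = msup (Qo s) := by rw [← Finset.sum_mul, hπ'.sum_one, one_mul]
  refine ⟨πs, hπs, hVle, fun s => ?_⟩
  have hne : Nonempty {π : S → A → ℝ // IsPolicy π} := ⟨⟨πs, hπs⟩⟩
  refine le_antisymm ?_ (ciSup_le fun π => hVle π.1 π.2 s)
  exact le_ciSup (f := fun π : {π : S → A → ℝ // IsPolicy π} => Vpi P R γ π.1 s)
    ⟨Vpi P R γ πs s, by rintro x ⟨π, rfl⟩; exact hVle π.1 π.2 s⟩ ⟨πs, hπs⟩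


lemma Qpi_isBellman (hP : IsKernel P) (hγ0 : 0 ≤ γ) (hγ1 : γ < 1) (hπ : IsPolicy π) :
    IsBellman P R γ π (Qpi P R γ π) := by
  have hex := exists_bellman (R := R) hP hγ0 hγ1 hπ
  rw [Qpi, dif_pos hex]; exact hex.choose_spec

end Generic

section Corr

variable [Fintype S] [Fintype A] [Fintype G] [Nonempty S] [Nonempty A]
variable {P : S → A → S → ℝ} {R : S → A → ℝ} {γ : ℝ} {g : A → G} {πi : G → A → ℝ}

lemma lower_collapse (hπi : IsLower g πi) (c : G → ℝ) (f : A → ℝ) :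
    ∑ h, c h * ∑ a, πi h a * f a = ∑ a, c (g a) * (πi (g a) a * f a) := by
  simp only [Finset.mul_sum]
  rw [Finset.sum_comm]
  refine Finset.sum_congr rfl fun a _ => ?_
  rw [Finset.sum_eq_single (g a)]
  · intro h _ hne
    rw [hπi.support h a (Ne.symm hne), zero_mul, mul_zero]
  · intro hmem; exact absurd (Finset.mem_univ _) hmem

lemma compose_isPolicy (hπi : IsLower g πi) {πo : S → G → ℝ} (hπo : IsPolicy πo) :
    IsPolicy (compose g πi πo) := by
  constructor
  · intro s a; exact mul_nonneg (hπo.nonneg s _) (hπi.nonneg _ _)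
  · intro s
    have h := lower_collapse hπi (πo s) (fun _ => (1 : ℝ))
    simp only [mul_one, hπi.sum_one] at h
    calc ∑ a, compose g πi πo s a = ∑ a, πo s (g a) * πi (g a) a := rfl
      _ = ∑ h', πo s h' := h.symm
      _ = 1 := hπo.sum_one s

lemma PG_isKernel (hP : IsKernel P) (hπi : IsLower g πi) : IsKernel (PG P πi) := by
  constructor
  · intro s h s'
    exact Finset.sum_nonneg fun a _ => mul_nonneg (hπi.nonneg h a) (hP.nonneg s a s')
  · intro s h
    have e : ∑ s', PG P πi s h s' = ∑ a, πi h a * ∑ s', P s a s' := by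
      simp only [PG, Finset.mul_sum]
      exact Finset.sum_comm
    rw [e]
    simp only [hP.sum_one, mul_one, hπi.sum_one]

lemma swap_helper (u : A → ℝ) (P' : A → S → ℝ) (w : S → ℝ) (γ : ℝ) :
    ∑ a, u a * (γ * ∑ s', P' a s' * w s') = γ * ∑ s', (∑ a, u a * P' a s') * w s' := by
  simp only [Finset.mul_sum, Finset.sum_mul]
  rw [Finset.sum_comm]
  exact Finset.sum_congr rfl fun s' _ => Finset.sum_congr rfl fun a _ => by ring

lemma vpi_compose (hP : IsKernel P) (hγ0 : 0 ≤ γ) (hγ1 : γ < 1)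
    (hπi : IsLower g πi) {πo : S → G → ℝ} (hπo : IsPolicy πo) (s : S) :
    Vpi P R γ (compose g πi πo) s = Vpi (PG P πi) (RG R πi) γ πo s := by
  haveI : Nonempty G := ⟨g (Classical.arbitrary A)⟩
  set Q := Qpi P R γ (compose g πi πo) with hQdef
  have hQB : IsBellman P R γ (compose g πi πo) Q :=
    Qpi_isBellman hP hγ0 hγ1 (compose_isPolicy hπi hπo)
  set QG : S → G → ℝ := fun s h => ∑ a, πi h a * Q s a with hQGdef
  have hV : ∀ s', ∑ a', compose g πi πo s' a' * Q s' a' = ∑ h', πo s' h' * QG s' h' := by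
    intro s'
    rw [hQGdef]
    rw [lower_collapse hπi (πo s') (fun a' => Q s' a')]
    refine Finset.sum_congr rfl fun a' _ => ?_
    rw [compose, mul_assoc]
  have hQGB : IsBellman (PG P πi) (RG R πi) γ πo QG := by
    intro s h
    calc QG s h = ∑ a, πi h a * Q s a := rfl
      _ = ∑ a, πi h a * (R s a + γ * ∑ s', P s a s' * ∑ a', compose g πi πo s' a' * Q s' a') := by
          refine Finset.sum_congr rfl fun a _ => ?_
          rw [← hQB s a]
      _ = (∑ a, πi h a * R s a)
            + ∑ a, πi h a * (γ * ∑ s', P s a s' * ∑ h', πo s' h' * QG s' h') := by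
          simp only [hV, mul_add, Finset.sum_add_distrib]
      _ = RG R πi s h + γ * ∑ s', PG P πi s h s' * ∑ h', πo s' h' * QG s' h' := by
          congr 1
          have := swap_helper (πi h) (fun a s' => P s a s')
            (fun s' => ∑ h', πo s' h' * QG s' h') γ
          simpa only [PG] using this
  have hEq : Qpi (PG P πi) (RG R πi) γ πo = QG :=
    bellman_unique (PG_isKernel hP hπi) hγ0 hγ1 hπo
      (Qpi_isBellman (PG_isKernel hP hπi) hγ0 hγ1 hπo) hQGB
  calc Vpi P R γ (compose g πi πo) s = ∑ a, compose g πi πo s a * Q s a := rfl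
    _ = ∑ h', πo s h' * QG s h' := hV s
    _ = Vpi (PG P πi) (RG R πi) γ πo s := by rw [Vpi, hEq]

end Corr


theorem statement_15 {S A G : Type*} [Fintype S] [Fintype A] [Fintype G]
    [Nonempty S] [Nonempty A]
    (P : S → A → S → ℝ) (R : S → A → ℝ) (γ : ℝ)
    (hP : IsKernel P) (hR : ∀ s a, 0 ≤ R s a ∧ R s a ≤ 1)
    (hγ0 : 0 ≤ γ) (hγ1 : γ < 1)
    (g : A → G) (hg : Function.Surjective g)
    (πi : G → A → ℝ) (hπi : IsLower g πi) :
    (∀ s, (⨆ πo : {πo : S → G → ℝ // IsPolicy πo}, Vpi P R γ (compose g πi πo.1) s)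
        = Vstar (PG P πi) (RG R πi) γ s) ∧
    ∃ πo : S → G → ℝ, IsPolicy πo ∧
      (∀ πo' : S → G → ℝ, IsPolicy πo' → ∀ s,
        Vpi P R γ (compose g πi πo') s ≤ Vpi P R γ (compose g πi πo) s) ∧
      (∀ s, Vpi P R γ (compose g πi πo) s = Vstar (PG P πi) (RG R πi) γ s) := by
  haveI : Nonempty G := ⟨g (Classical.arbitrary A)⟩
  obtain ⟨πs, hπs, hbest, hVst⟩ := exists_optimal (P := PG P πi) (R := RG R πi)
    (PG_isKernel hP hπi) hγ0 hγ1
  constructor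
  · intro s
    rw [Vstar]
    exact iSup_congr fun πo => vpi_compose hP hγ0 hγ1 hπi πo.2 s
  · refine ⟨πs, hπs, fun πo' hπo' s => ?_, fun s => ?_⟩
    · rw [vpi_compose hP hγ0 hγ1 hπi hπo' s, vpi_compose hP hγ0 hγ1 hπi hπs s]
      exact hbest πo' hπo' s
    · rw [vpi_compose hP hγ0 hγ1 hπi hπs s]
      exact hVst s


end MDPGroup
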